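/- For every natural number k, the probability of measuring a rewarded action sequence after k Grover iterations equals ∑_{i∈W} (((R·O)^k)·ψ)(i)² = sin²((2k+1)·arcsin(√Q)), i.e., it equals the amplified winning probability G(Q,k) = sin²((2k+1)·arcsin(√Q)). -/

import Mathlib

/-!
Write `ψ = ψ_W + ψ_B` for the parts of `ψ` supported on `W` and off `W`. Since
`‖ψ_W‖² = Q = sin² θ` and `‖ψ_B‖² = cos² θ`, the vectors
`groverVec θ φ = (sin φ / sin θ) ψ_W + (cos φ / cos θ) ψ_B` form a circle through `ψ`
(at `φ = θ`), and the Grover iterate `R O` moves along it by `φ ↦ φ + 2θ`. Hence `(R O)^k ψ`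
is the point at `φ = (2k+1)θ`, whose squared mass on `W` is `sin² φ`.
-/

open Real Matrix Finset

theorem sin_add_two_mul_eq (φ θ : ℝ) : sin (φ + 2 * θ) = 2 * cos (φ + θ) * sin θ + sin φ := by
  rw [show φ + 2 * θ = (φ + θ) + θ by ring, sin_add, show φ = (φ + θ) - θ by ring, sin_sub]
  ring_nf

theorem cos_add_two_mul_eq (φ θ : ℝ) : cos (φ + 2 * θ) = 2 * cos (φ + θ) * cos θ - cos φ := by
  rw [show φ + 2 * θ = (φ + θ) + θ by ring, cos_add, show φ = (φ + θ) - θ by ring, cos_sub]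
  ring_nf

namespace Grover

variable {ι : Type*} [DecidableEq ι] (ψ : ι → ℝ) (W : Finset ι)

def oracle : Matrix ι ι ℝ := diagonal fun i => if i ∈ W then -1 else 1

def reflection : Matrix ι ι ℝ := 2 • vecMulVec ψ ψ - 1

def split (a b : ℝ) : ι → ℝ := fun i => (if i ∈ W then a else b) * ψ i

noncomputable def groverVec (θ φ : ℝ) : ι → ℝ := split ψ W (sin φ / sin θ) (cos φ / cos θ)

variable {θ : ℝ}

theorem groverVec_self (hs : sin θ ≠ 0) (hc : cos θ ≠ 0) : groverVec ψ W θ θ = ψ := by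
  ext i
  simp [groverVec, split, hs, hc]

theorem sum_sq_groverVec (hs : sin θ ≠ 0) (hW : ∑ i ∈ W, ψ i ^ 2 = sin θ ^ 2) (φ : ℝ) :
    ∑ i ∈ W, groverVec ψ W θ φ i ^ 2 = sin φ ^ 2 := by
  calc ∑ i ∈ W, groverVec ψ W θ φ i ^ 2 = (sin φ / sin θ) ^ 2 * ∑ i ∈ W, ψ i ^ 2 := by
        rw [mul_sum]
        exact sum_congr rfl fun i hi => by simp [groverVec, split, hi, mul_pow]
    _ = sin φ ^ 2 := by rw [hW]; field_simp

variable [Fintype ι]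

theorem oracle_mulVec_split (a b : ℝ) :
    oracle W *ᵥ split ψ W a b = split ψ W (-a) b := by
  ext i
  by_cases hi : i ∈ W <;> simp [oracle, split, mulVec_diagonal, hi]

theorem dotProduct_split (a b : ℝ) :
    ψ ⬝ᵥ split ψ W a b = a * ∑ i ∈ W, ψ i ^ 2 + b * ∑ i ∈ Wᶜ, ψ i ^ 2 := by
  rw [dotProduct, ← sum_add_sum_compl W, mul_sum, mul_sum]
  congr 1 <;> refine sum_congr rfl fun i hi => ?_
  · simp only [split, hi, if_true]; ring
  · simp only [split, mem_compl.mp hi, if_false]; ring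

theorem reflection_mulVec (v : ι → ℝ) :
    reflection ψ *ᵥ v = (2 * (ψ ⬝ᵥ v)) • ψ - v := by
  rw [reflection, sub_mulVec, one_mulVec, smul_mulVec, vecMulVec_mulVec, op_smul_eq_smul, two_nsmul,
    ← add_smul, ← two_mul]

theorem reflection_mulVec_split (a b : ℝ) :
    reflection ψ *ᵥ split ψ W a b =
      split ψ W (2 * (ψ ⬝ᵥ split ψ W a b) - a) (2 * (ψ ⬝ᵥ split ψ W a b) - b) := by
  ext i
  rw [reflection_mulVec]
  by_cases hi : i ∈ W <;> simp only [Pi.sub_apply, Pi.smul_apply, smul_eq_mul, split, hi, if_true, if_false] <;> ring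

theorem reflection_mul_oracle_mulVec_groverVec (hs : sin θ ≠ 0) (hc : cos θ ≠ 0)
    (hW : ∑ i ∈ W, ψ i ^ 2 = sin θ ^ 2) (hWc : ∑ i ∈ Wᶜ, ψ i ^ 2 = cos θ ^ 2) (φ : ℝ) :
    (reflection ψ * oracle W) *ᵥ groverVec ψ W θ φ = groverVec ψ W θ (φ + 2 * θ) := by
  have hdot : ψ ⬝ᵥ split ψ W (-(sin φ / sin θ)) (cos φ / cos θ) = cos (φ + θ) := by
    rw [dotProduct_split, hW, hWc, cos_add]
    field_simp
    ring
  rw [← mulVec_mulVec, groverVec, oracle_mulVec_split, reflection_mulVec_split, hdot, groverVec,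
    sin_add_two_mul_eq, cos_add_two_mul_eq]
  congr 1
  · field_simp
    ring
  · field_simp

theorem pow_mulVec_eq_groverVec (hs : sin θ ≠ 0) (hc : cos θ ≠ 0)
    (hW : ∑ i ∈ W, ψ i ^ 2 = sin θ ^ 2) (hWc : ∑ i ∈ Wᶜ, ψ i ^ 2 = cos θ ^ 2) (k : ℕ) :
    ((reflection ψ * oracle W) ^ k) *ᵥ ψ = groverVec ψ W θ ((2 * k + 1) * θ) := by
  induction k with
  | zero => simp [groverVec_self ψ W hs hc]
  | succ k ih =>
    rw [pow_succ', ← mulVec_mulVec, ih, reflection_mul_oracle_mulVec_groverVec ψ W hs hc hW hWc]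
    push_cast
    ring_nf

end Grover

/-- The probability of measuring a rewarded action sequence after `k` Grover
iterations equals the amplified winning probability
`G(Q,k) = sin² ((2k+1)·arcsin √Q)`. -/
theorem grover_pow_winning_probability (n : ℕ) (pr : Fin n → ℝ)
    (hpr : ∀ i, 0 ≤ pr i) (hsum : ∑ i, pr i = 1)
    (W : Finset (Fin n)) (Q : ℝ) (hQ : Q = ∑ i ∈ W, pr i)
    (hQpos : 0 < Q) (hQlt : Q < 1)
    (ψ : Fin n → ℝ) (hψ : ∀ i, ψ i = Real.sqrt (pr i))
    (O : Matrix (Fin n) (Fin n) ℝ)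
    (hO : O = Matrix.diagonal (fun i => if i ∈ W then (-1 : ℝ) else 1))
    (R : Matrix (Fin n) (Fin n) ℝ) (hR : R = 2 • Matrix.vecMulVec ψ ψ - 1) :
    ∀ k : ℕ,
      ∑ i ∈ W, (((R * O) ^ k).mulVec ψ i) ^ 2 =
        Real.sin ((2 * k + 1) * Real.arcsin (Real.sqrt Q)) ^ 2 := by
  intro k
  set θ := arcsin (√Q)
  have hψsq (i : Fin n) : ψ i ^ 2 = pr i := by rw [hψ, sq_sqrt (hpr i)]
  have hsin : sin θ ^ 2 = Q := by
    rw [sin_arcsin (by linarith [sqrt_nonneg Q]) (sqrt_le_one.mpr hQlt.le), sq_sqrt hQpos.le]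
  have hcos : cos θ ^ 2 = 1 - Q := by rw [cos_sq', hsin]
  have hs : sin θ ≠ 0 := fun h => by rw [h] at hsin; linarith
  have hc : cos θ ≠ 0 := fun h => by rw [h] at hcos; linarith
  have hW : ∑ i ∈ W, ψ i ^ 2 = sin θ ^ 2 := by simp only [hψsq, hsin, hQ]
  have hWc : ∑ i ∈ Wᶜ, ψ i ^ 2 = cos θ ^ 2 := by
    rw [hcos, hQ, ← hsum, ← sum_add_sum_compl W pr]
    simp only [hψsq, add_sub_cancel_left]
  have hRO : R * O = Grover.reflection ψ * Grover.oracle W := by rw [hR, hO]; rfl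
  rw [hRO, Grover.pow_mulVec_eq_groverVec ψ W hs hc hW hWc, Grover.sum_sq_groverVec ψ W hs hW]
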